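/- Greedy forward selection on majority-voting ensembles has worst-case error rate 1/2: for every δ > 0 there exists a pool of independent classifiers with accuracies in (1/2, 1) on which the greedy forward strategy (add members only if ensemble accuracy strictly improves, starting from the most accurate member) terminates with an ensemble of accuracy at most 1/2 + δ, while some subset of the pool achieves majority-voting accuracy at least 1 − δ. -/

import Mathlib

open Finset

/-- Majority-voting ensemble accuracy of independent binary classifiers indexed by `L`
with individual accuracies `p i`. -/
noncomputable def majAcc {ι : Type*} [DecidableEq ι] (L : Finset ι) (p : ι → ℝ) : ℝ :=
  ∑ k ∈ Finset.Icc (L.card / 2 + 1) L.card,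
    ∑ I ∈ Finset.powersetCard k L, (∏ i ∈ I, p i) * ∏ j ∈ L \ I, (1 - p j)

/-!
Take one member of accuracy `1/2 + c` and `2t + 1` members of accuracy `q = 1/2 + c/2`.
In terms of the margins `x, y, z` over `1/2`, a vote of three has accuracy
`1/2 + (x + y + z)/2 - 2xyz`, so adding two weak members to the strong one never helps
(`y + z ≤ x`) and greedy selection stops at accuracy `1/2 + c`. The majority of the weak
members, on the other hand, errs only if at most `t` of them are right; each such outcome has
probability at most `(q(1-q))^t` and the coefficients `choose (2t+1) k`, `k ≤ t`, sum to `4^t`,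
so the error is at most `(4q(1-q))^t = (1 - c²)^t`, which tends to `0`.
-/

lemma sum_range_choose_mul_pow_le {q : ℝ} (hq : 1 / 2 ≤ q) (hq1 : q ≤ 1) (t : ℕ) :
    ∑ k ∈ range (t + 1), ((2 * t + 1).choose k : ℝ) * (q ^ k * (1 - q) ^ (2 * t + 1 - k)) ≤
      (4 * (q * (1 - q))) ^ t := by
  have hterm : ∀ k ∈ range (t + 1), q ^ k * (1 - q) ^ (2 * t + 1 - k) ≤ (q * (1 - q)) ^ t := by
    intro k hk
    have hkt : k ≤ t := Nat.lt_succ_iff.mp (mem_range.mp hk)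
    calc q ^ k * (1 - q) ^ (2 * t + 1 - k)
        = q ^ k * (1 - q) ^ (t - k) * ((1 - q) ^ t * (1 - q)) := by
          rw [mul_assoc, ← pow_succ, ← pow_add]; congr 2; omega
      _ ≤ q ^ k * q ^ (t - k) * ((1 - q) ^ t * 1) := by
          gcongr <;> linarith
      _ = (q * (1 - q)) ^ t := by rw [← pow_add, Nat.add_sub_cancel' hkt, mul_one, mul_pow]
  calc ∑ k ∈ range (t + 1), ((2 * t + 1).choose k : ℝ) * (q ^ k * (1 - q) ^ (2 * t + 1 - k))
      ≤ ∑ k ∈ range (t + 1), ((2 * t + 1).choose k : ℝ) * (q * (1 - q)) ^ t :=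
        sum_le_sum fun k hk => mul_le_mul_of_nonneg_left (hterm k hk) (Nat.cast_nonneg _)
    _ = (4 * (q * (1 - q))) ^ t := by
        rw [← sum_mul, ← Nat.cast_sum, Nat.sum_range_choose_halfway, Nat.cast_pow,
          Nat.cast_ofNat, ← mul_pow]

section

variable {ι : Type*} [DecidableEq ι]

lemma majAcc_eq_sum_choose (L : Finset ι) {p : ι → ℝ} {q : ℝ} (hp : ∀ i ∈ L, p i = q) :
    majAcc L p =
      ∑ k ∈ Icc (#L / 2 + 1) #L, ((#L).choose k : ℝ) * (q ^ k * (1 - q) ^ (#L - k)) := by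
  refine sum_congr rfl fun k _ => ?_
  have hterm : ∀ I ∈ powersetCard k L,
      (∏ i ∈ I, p i) * ∏ j ∈ L \ I, (1 - p j) = q ^ k * (1 - q) ^ (#L - k) := by
    intro I hI
    obtain ⟨hIL, hIk⟩ := mem_powersetCard.mp hI
    rw [prod_eq_pow_card fun i hi => hp i (hIL hi),
      prod_eq_pow_card fun j hj => by rw [hp j (mem_sdiff.mp hj).1], card_sdiff_of_subset hIL, hIk]
  rw [sum_congr rfl hterm, sum_const, card_powersetCard, nsmul_eq_mul]

lemma one_sub_pow_le_majAcc {L : Finset ι} {t : ℕ} (hL : #L = 2 * t + 1) {p : ι → ℝ} {q : ℝ}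
    (hp : ∀ i ∈ L, p i = q) (hq : 1 / 2 ≤ q) (hq1 : q ≤ 1) :
    1 - (4 * (q * (1 - q))) ^ t ≤ majAcc L p := by
  set f : ℕ → ℝ := fun k => ((2 * t + 1).choose k : ℝ) * (q ^ k * (1 - q) ^ (2 * t + 1 - k))
  have hsum : ∑ k ∈ range (2 * t + 1 + 1), f k = 1 := by
    simpa [f, add_pow, mul_comm, mul_left_comm] using (add_pow q (1 - q) (2 * t + 1)).symm
  have hsplit : ∑ k ∈ range (t + 1), f k + ∑ k ∈ Icc (t + 1) (2 * t + 1), f k = 1 := by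
    rw [← hsum, ← Ico_add_one_right_eq_Icc, sum_range_add_sum_Ico f (by omega)]
  rw [majAcc_eq_sum_choose L hp, hL, show (2 * t + 1) / 2 + 1 = t + 1 by omega]
  linarith [sum_range_choose_mul_pow_le hq hq1 t]

lemma majAcc_singleton (a : ι) (p : ι → ℝ) : majAcc {a} p = p a := by
  simp [majAcc, powersetCard_one]

lemma majAcc_triple {a b c : ι} (hab : a ≠ b) (hac : a ≠ c) (hbc : b ≠ c) (p : ι → ℝ) :
    majAcc {a, b, c} p =
      p a * p b * (1 - p c) + p a * p c * (1 - p b) + p b * p c * (1 - p a) + p a * p b * p c := by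
  have hcard : #{a, b, c} = 3 := card_eq_three.mpr ⟨a, b, c, hab, hac, hbc, rfl⟩
  rw [majAcc, hcard, show Icc (3 / 2 + 1) 3 = {2, 3} by decide, sum_pair (by decide),
    ← hcard, powersetCard_self]
  simp only [powersetCard_succ_insert, powersetCard_one, powersetCard_zero, mem_insert,
    mem_singleton, hab, hac, hbc, or_self, not_false_eq_true, map_singleton,
    Function.Embedding.coeFn_mk, image_singleton, image_insert, insert_empty_eq, union_singleton,
    union_insert, powersetCard_eq_empty.2 (by simp : #{c} < 2), sum_singleton]
  rw [sum_insert, sum_pair]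
  · simp only [mem_singleton, hab, hac, hbc, not_false_eq_true, prod_insert, prod_singleton,
      mem_insert, or_false, or_self, insert_sdiff_of_mem, sdiff_insert_of_notMem,
      sdiff_singleton_eq_erase, erase_insert_eq_erase, erase_eq_of_notMem, ne_eq,
      erase_insert_of_ne, erase_singleton, insert_empty_eq, insert_sdiff_cancel, sdiff_self,
      bot_eq_empty, prod_empty, mul_one]
    ring
  · intro h
    have ha : a ∈ ({b, c} : Finset ι) := h ▸ by simp
    simp [hab, hac] at ha
  · simp only [mem_insert, mem_singleton, not_or]
    refine ⟨fun h => ?_, fun h => ?_⟩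
    · have hb : b ∈ ({a, c} : Finset ι) := h ▸ by simp
      simp [hab.symm, hbc] at hb
    · have ha : a ∈ ({b, c} : Finset ι) := h ▸ by simp
      simp [hab, hac] at ha

lemma majAcc_triple_le {a b c : ι} (hab : a ≠ b) (hac : a ≠ c) (hbc : b ≠ c) {p : ι → ℝ}
    (hb : 1 / 2 ≤ p b) (hc : 1 / 2 ≤ p c)
    (hmargin : (p b - 1 / 2) + (p c - 1 / 2) ≤ p a - 1 / 2) :
    majAcc {a, b, c} p ≤ majAcc {a} p := by
  rw [majAcc_triple hab hac hbc, majAcc_singleton]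
  have hxyz : 0 ≤ (p a - 1 / 2) * (p b - 1 / 2) * (p c - 1 / 2) :=
    mul_nonneg (mul_nonneg (by linarith) (by linarith)) (by linarith)
  nlinarith

end

/-- Greedy forward selection on majority-voting ensembles has worst-case error rate 1/2:
for every `δ > 0` there is a pool of classifiers with accuracies in `(1/2,1)` on which
the greedy forward strategy (start from the most accurate member `i₀`; add a pair of
members only if ensemble accuracy strictly improves — here no pair improves, so it
terminates at `{i₀}`) ends with accuracy at most `1/2 + δ`, while some subset of the
pool achieves majority-voting accuracy at least `1 − δ`. -/
theorem greedy_forward_worst_case (δ : ℝ) (hδ : 0 < δ) :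
    ∃ (n : ℕ) (p : Fin n → ℝ),
      (∀ i, p i ∈ Set.Ioo (1/2 : ℝ) 1) ∧
      ∃ i₀ : Fin n,
        (∀ j, p j ≤ p i₀) ∧
        (∀ j k : Fin n, j ≠ i₀ → k ≠ i₀ → j ≠ k →
          majAcc ({i₀, j, k} : Finset (Fin n)) p ≤ majAcc ({i₀} : Finset (Fin n)) p) ∧
        majAcc ({i₀} : Finset (Fin n)) p ≤ 1/2 + δ ∧
        ∃ L : Finset (Fin n), 1 - δ ≤ majAcc L p := by
  set c : ℝ := min δ (1 / 4)
  have hc : 0 < c := lt_min hδ (by norm_num)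
  have hc4 : c ≤ 1 / 4 := min_le_right _ _
  obtain ⟨t, ht⟩ := exists_pow_lt_of_lt_one hδ (by nlinarith : 1 - c ^ 2 < 1)
  set p : Fin (2 * t + 2) → ℝ := fun i => if i = 0 then 1 / 2 + c else 1 / 2 + c / 2
  have hp : ∀ i ∈ univ.erase 0, p i = 1 / 2 + c / 2 := fun i hi => if_neg (ne_of_mem_erase hi)
  refine ⟨2 * t + 2, p, fun i => ?_, 0, fun j => ?_, fun j k hj hk hjk => ?_, ?_, univ.erase 0, ?_⟩
  · constructor <;> dsimp only [p] <;> split_ifs <;> linarith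
  · simp only [p, ↓reduceIte]; split_ifs <;> linarith
  · refine majAcc_triple_le (Ne.symm hj) (Ne.symm hk) hjk ?_ ?_ ?_ <;>
      simp only [p, ↓reduceIte, if_neg hj, if_neg hk] <;> linarith
  · rw [majAcc_singleton]; simp only [p, ↓reduceIte]; linarith [min_le_left δ (1 / 4)]
  · have hL : #(univ.erase (0 : Fin (2 * t + 2))) = 2 * t + 1 := by simp
    have := one_sub_pow_le_majAcc hL hp (by linarith) (by linarith)
    rw [show 4 * ((1 / 2 + c / 2) * (1 - (1 / 2 + c / 2))) = 1 - c ^ 2 by ring] at this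
    linarith
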